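/- arXiv:1110.6816 — 3 statements merged into one kernel-verified Lean document; each statement's English description precedes it below -/
import Mathlib

section
/- Let V be a finite-dimensional vector space over ℚ of dimension d ≥ 1, let Ψ be a subset of V and μ₀ ∈ V such that Ψ ∪ {μ₀} spans V. Let S be a set of linear functionals φ : V → ℚ such that for every φ ∈ S and every μ ∈ Ψ one has φ(μ) = 0 or φ(μ) = 1, and moreover φ(μ₀) = 1 for every φ ∈ S. Then S is finite and has cardinality at most 2^(d−1). -/
/-!
Extend `μ₀` to a basis of `V` contained in `Ψ ∪ {μ₀}`. A functional in `S` is pinned to `1` at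
`μ₀` and takes values in `{0, 1}` on the remaining `d - 1` basis vectors, so it is determined by
the subset of those on which it equals `1`.
-/

open Module Submodule

section ZeroOneValued

variable {R M : Type*} [Semiring R] [AddCommMonoid M] [Module R M]
  {μ₀ : M} {s : Finset M} {S : Set (M →ₗ[R] R)}

open Classical in
theorem injOn_decide_eq_one_of_span_insert_eq_top (hspan : span R (insert μ₀ (s : Set M)) = ⊤)
    (hS : ∀ φ ∈ S, ∀ μ ∈ s, φ μ = 0 ∨ φ μ = 1) {c : R} (hS0 : ∀ φ ∈ S, φ μ₀ = c) :
    S.InjOn fun φ (μ : s) => decide (φ μ = 1) := by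
  intro φ hφ ψ hψ hφψ
  refine LinearMap.ext_on hspan ?_
  rintro μ (rfl | hμ)
  · rw [hS0 φ hφ, hS0 ψ hψ]
  · have hμ' := congrFun hφψ ⟨μ, hμ⟩
    rcases hS φ hφ μ hμ with h | h <;> rcases hS ψ hψ μ hμ with h' | h' <;> simp_all

theorem finite_and_card_le_two_pow_of_span_insert_eq_top
    (hspan : span R (insert μ₀ (s : Set M)) = ⊤)
    (hS : ∀ φ ∈ S, ∀ μ ∈ s, φ μ = 0 ∨ φ μ = 1) {c : R} (hS0 : ∀ φ ∈ S, φ μ₀ = c) :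
    S.Finite ∧ Nat.card S ≤ 2 ^ s.card := by
  have hinj := (injOn_decide_eq_one_of_span_insert_eq_top hspan hS hS0).injective
  refine ⟨Finite.of_injective _ hinj, ?_⟩
  calc Nat.card S ≤ Nat.card (s → Bool) := Nat.card_le_card_of_injective _ hinj
    _ = 2 ^ s.card := by simp [Nat.card_fun]

end ZeroOneValued

open Classical in
theorem exists_finset_subset_span_insert_eq_top_card_eq {K V : Type*} [DivisionRing K]
    [AddCommGroup V] [Module K V] [FiniteDimensional K V] {Ψ : Set V} {μ₀ : V} (hμ₀ : μ₀ ≠ 0)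
    (hΨ : span K (insert μ₀ Ψ) = ⊤) :
    ∃ s : Finset V, ↑s ⊆ Ψ ∧ span K (insert μ₀ (s : Set V)) = ⊤ ∧ s.card = finrank K V - 1 := by
  obtain ⟨B, hBΨ, hμ₀B, hΨB, hB⟩ := exists_linearIndepOn_id_extension
    ((linearIndepOn_singleton_iff K (v := id)).2 hμ₀)
    (Set.singleton_subset_iff.2 (Set.mem_insert μ₀ Ψ))
  have hBspan : span K B = ⊤ := eq_top_iff.2 (hΨ ▸ span_le.2 hΨB)
  lift B to Finset V using LinearIndependent.set_finite_of_isNoetherian hB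
  have hμ₀B : μ₀ ∈ B := Finset.mem_coe.1 (Set.singleton_subset_iff.1 hμ₀B)
  refine ⟨B.erase μ₀, ?_, ?_, ?_⟩
  · rw [Finset.coe_erase]
    exact Set.sdiff_singleton_subset_iff.2 hBΨ
  · rwa [Finset.coe_erase, Set.insert_sdiff_singleton, Set.insert_eq_of_mem hμ₀B]
  · rw [Finset.card_erase_of_mem hμ₀B, ← finrank_span_finset_eq_card hB, hBspan, finrank_top]

theorem stmt1_general (V : Type*) [AddCommGroup V] [Module ℚ V] [FiniteDimensional ℚ V]
    (d : ℕ) (hd : d = Module.finrank ℚ V)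
    (Ψ : Set V) (μ₀ : V) (hΨ : Submodule.span ℚ (Ψ ∪ {μ₀}) = ⊤)
    (S : Set (V →ₗ[ℚ] ℚ))
    (hS : ∀ φ ∈ S, ∀ μ ∈ Ψ, φ μ = 0 ∨ φ μ = 1)
    (hS0 : ∀ φ ∈ S, φ μ₀ = 1) :
    S.Finite ∧ Nat.card S ≤ 2 ^ (d - 1) := by
  rcases S.eq_empty_or_nonempty with rfl | ⟨φ, hφ⟩
  · simp
  have hμ₀ : μ₀ ≠ 0 := fun h => by simpa [h] using hS0 φ hφ
  rw [Set.union_singleton] at hΨ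
  obtain ⟨s, hsΨ, hspan, hcard⟩ := exists_finset_subset_span_insert_eq_top_card_eq hμ₀ hΨ
  obtain ⟨hfin, hle⟩ := finite_and_card_le_two_pow_of_span_insert_eq_top hspan
    (fun φ hφ μ hμ => hS φ hφ μ (hsΨ hμ)) hS0
  exact ⟨hfin, by rwa [hd, ← hcard]⟩

/-- Let `V` be a finite-dimensional `ℚ`-vector space of dimension `d ≥ 1`,
`Ψ ⊆ V` and `μ₀ ∈ V` with `Ψ ∪ {μ₀}` spanning `V`. Let `S` be a set of linear functionals
`φ : V → ℚ` such that `φ μ ∈ {0, 1}` for every `φ ∈ S`, `μ ∈ Ψ`, and `φ μ₀ = 1` for every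
`φ ∈ S`. Then `S` is finite of cardinality at most `2 ^ (d - 1)`. -/
theorem stmt1 (V : Type*) [AddCommGroup V] [Module ℚ V] [FiniteDimensional ℚ V]
    (d : ℕ) (hd : d = Module.finrank ℚ V) (hd1 : 1 ≤ d)
    (Ψ : Set V) (μ₀ : V) (hΨ : Submodule.span ℚ (Ψ ∪ {μ₀}) = ⊤)
    (S : Set (V →ₗ[ℚ] ℚ))
    (hS : ∀ φ ∈ S, ∀ μ ∈ Ψ, φ μ = 0 ∨ φ μ = 1)
    (hS0 : ∀ φ ∈ S, φ μ₀ = 1) :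
    S.Finite ∧ Nat.card S ≤ 2 ^ (d - 1) :=
  stmt1_general V d hd Ψ μ₀ hΨ S hS hS0
end

section
/- For every positive integer n, g₁(n) ≤ g(n + ⌊√(2n)⌋), where g is Landau's function and g₁ is the modified Landau function, and ⌊√(2n)⌋ is the integer part of √(2n). -/
/-- Landau's function: `g n` is the maximum of `lcm(a₁, …, a_k)` over all finite multisets
of positive integers with sum `n` (so `g 0 = 1`, attained by the empty multiset). -/
noncomputable def landau (n : ℕ) : ℕ :=
  sSup {m : ℕ | ∃ M : Multiset ℕ, (∀ a ∈ M, 0 < a) ∧ M.sum = n ∧ M.lcm = m}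

/-- The modified Landau function: `g₁ n` is the maximum of `lcm(a₁, …, a_k)` over all
finite multisets of integers `aᵢ ≥ 2` with `∑ᵢ (aᵢ - 1) = n` (so `g₁ 0 = 1`). -/
noncomputable def landau₁ (n : ℕ) : ℕ :=
  sSup {m : ℕ | ∃ M : Multiset ℕ, (∀ a ∈ M, 2 ≤ a) ∧ (M.map (· - 1)).sum = n ∧ M.lcm = m}

/-! Repeating a part does not change the lcm, so for `g₁` it suffices to consider `k` distinct
parts `aᵢ ≥ 2`. The numbers `aᵢ - 1` are then `k` distinct positive integers, so
`n ≥ ∑ (aᵢ - 1) ≥ k(k+1)/2`, whence `k ≤ ⌊√(2n)⌋` and `∑ aᵢ = ∑ (aᵢ - 1) + k ≤ n + ⌊√(2n)⌋`.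
Padding with parts equal to `1` gives a partition of `n + ⌊√(2n)⌋` with the same lcm. -/

open Finset

theorem Finset.sum_range_add_le_sum (s : Finset ℕ) {c : ℕ} (hc : ∀ a ∈ s, c ≤ a) :
    ∑ i ∈ range #s, (i + c) ≤ ∑ a ∈ s, a := by
  induction s using Finset.induction_on_max with
  | empty => simp
  | insert a s hlt ih =>
    have ha : a ∉ s := fun h => (hlt a h).false
    have hcard : #s + c ≤ a := by
      have hsub : s ⊆ Ico c a := fun x hx => mem_Ico.2 ⟨hc x (mem_insert_of_mem hx), hlt x hx⟩
      have hle := card_le_card hsub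
      rw [Nat.card_Ico] at hle
      have := hc a (mem_insert_self a s)
      omega
    rw [card_insert_of_notMem ha, sum_range_succ, sum_insert ha]
    linarith [ih fun x hx => hc x (mem_insert_of_mem hx)]

theorem Finset.two_mul_sum_range_add_two (k : ℕ) :
    2 * ∑ i ∈ range k, (i + 2) = k * (k + 1) + 2 * k := by
  induction k with
  | zero => simp
  | succ k ih => rw [sum_range_succ, mul_add, ih]; ring

theorem Finset.sum_le_sum_pred_add_sqrt (s : Finset ℕ) (hs : ∀ a ∈ s, 2 ≤ a) :
    ∑ a ∈ s, a ≤ ∑ a ∈ s, (a - 1) + Nat.sqrt (2 * ∑ a ∈ s, (a - 1)) := by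
  have hsum : ∑ a ∈ s, a = ∑ a ∈ s, (a - 1) + #s := by
    rw [card_eq_sum_ones, ← sum_add_distrib]
    exact sum_congr rfl fun a ha => by have := hs a ha; omega
  have hcard : #s ≤ Nat.sqrt (2 * ∑ a ∈ s, (a - 1)) := by
    rw [Nat.le_sqrt]
    have := sum_range_add_le_sum s hs
    have := two_mul_sum_range_add_two #s
    linarith
  omega

theorem Multiset.sum_toFinset_le_sum_map {α : Type*} [DecidableEq α] (M : Multiset α)
    (f : α → ℕ) : ∑ a ∈ M.toFinset, f a ≤ (M.map f).sum := by
  obtain ⟨u, hu⟩ := Multiset.le_iff_exists_add.1 (Multiset.map_le_map (f := f) M.dedup_le)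
  change (M.dedup.map f).sum ≤ _
  rw [hu, Multiset.sum_add]
  exact Nat.le_add_right _ _

theorem landau_bddAbove (N : ℕ) :
    BddAbove {m : ℕ | ∃ M : Multiset ℕ, (∀ a ∈ M, 0 < a) ∧ M.sum = N ∧ M.lcm = m} := by
  refine ⟨N.factorial, ?_⟩
  rintro _ ⟨M, hpos, rfl, rfl⟩
  refine Nat.le_of_dvd (Nat.factorial_pos _) (Multiset.lcm_dvd.2 fun a ha => ?_)
  exact Nat.dvd_factorial (hpos a ha) (Multiset.le_sum_of_mem ha)

theorem Multiset.lcm_le_landau {N : ℕ} (M : Multiset ℕ) (hpos : ∀ a ∈ M, 0 < a)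
    (hsum : M.sum ≤ N) : M.lcm ≤ landau N := by
  refine le_csSup (landau_bddAbove N) ⟨M + replicate (N - M.sum) 1, ?_, ?_, ?_⟩
  · intro a ha
    rcases mem_add.1 ha with ha | ha
    · exact hpos a ha
    · rw [eq_of_mem_replicate ha]; exact Nat.one_pos
  · rw [sum_add, sum_replicate, smul_eq_mul, mul_one]
    omega
  · have hone : (replicate (N - M.sum) 1).lcm = 1 :=
      Nat.dvd_one.1 (lcm_dvd.2 fun b hb => by rw [eq_of_mem_replicate hb])
    simp [lcm_add, hone]

theorem stmt5_general (n : ℕ) : landau₁ n ≤ landau (n + Nat.sqrt (2 * n)) := by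
  refine csSup_le' ?_
  rintro _ ⟨M, hM, rfl, rfl⟩
  have hs : ∀ a ∈ M.toFinset, 2 ≤ a := fun a ha => hM a (Multiset.mem_toFinset.1 ha)
  have hT : ∑ a ∈ M.toFinset, (a - 1) ≤ (M.map (· - 1)).sum := M.sum_toFinset_le_sum_map _
  rw [← Multiset.lcm_dedup]
  refine M.dedup.lcm_le_landau (fun a ha => ?_) ?_
  · have := hM a (Multiset.mem_dedup.1 ha)
    omega
  · calc M.dedup.sum = ∑ a ∈ M.toFinset, a := by simp [Finset.sum]
      _ ≤ _ := M.toFinset.sum_le_sum_pred_add_sqrt hs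
      _ ≤ _ := add_le_add hT (Nat.sqrt_le_sqrt (by omega))

/-- For every positive integer `n`, `g₁(n) ≤ g(n + ⌊√(2n)⌋)`. -/
theorem stmt5 (n : ℕ) (hn : 0 < n) : landau₁ n ≤ landau (n + Nat.sqrt (2 * n)) :=
  stmt5_general n
end

section
/- Define f(x) = ((x + √(2x)) · log(x + √(2x))) / (x · log x) for real x > 1, with natural logarithm. Then f is decreasing on the interval (1, ∞): for all 1 < x ≤ y, f(y) ≤ f(x). -/
/-!
Writing `u = √(c / x)`, one has `x + √(c x) = x (1 + u)`, hence
`f(x) = (1 + u) (1 + log (1 + u) / log x)`. As `x` grows, `u` decreases, so both factors are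
nonnegative and decreasing, and so is their product.
-/

open Real Set

lemma add_sqrt_mul_eq_mul_one_add_sqrt_div (c : ℝ) {x : ℝ} (hx : 0 < x) :
    x + √(c * x) = x * (1 + √(c / x)) := by
  rw [show c * x = x ^ 2 * (c / x) by field_simp, sqrt_mul (sq_nonneg x), sqrt_sq hx.le]
  ring

lemma add_sqrt_mul_log_div_eq (c : ℝ) {x : ℝ} (hx : 1 < x) :
    (x + √(c * x)) * log (x + √(c * x)) / (x * log x) =
      (1 + √(c / x)) * (1 + log (1 + √(c / x)) / log x) := by
  have hx₀ : 0 < x := zero_lt_one.trans hx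
  have hu : 0 < 1 + √(c / x) := by positivity
  have hlog : log x ≠ 0 := (log_pos hx).ne'
  rw [add_sqrt_mul_eq_mul_one_add_sqrt_div c hx₀, log_mul hx₀.ne' hu.ne']
  field_simp

theorem antitoneOn_add_sqrt_mul_log_div {c : ℝ} (hc : 0 ≤ c) :
    AntitoneOn (fun x => (x + √(c * x)) * log (x + √(c * x)) / (x * log x)) (Ioi 1) := by
  intro x (hx : 1 < x) y (hy : 1 < y) hxy
  simp only [add_sqrt_mul_log_div_eq c hx, add_sqrt_mul_log_div_eq c hy]
  have hsqrt : √(c / y) ≤ √(c / x) := sqrt_le_sqrt (div_le_div_of_nonneg_left hc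
    (zero_lt_one.trans hx) hxy)
  have hlog_nonneg : 0 ≤ log (1 + √(c / y)) := log_nonneg (by simp)
  have hlog_le : log (1 + √(c / y)) ≤ log (1 + √(c / x)) :=
    log_le_log (by positivity) (by linarith)
  have hratio : log (1 + √(c / y)) / log y ≤ log (1 + √(c / x)) / log x :=
    div_le_div₀ (hlog_nonneg.trans hlog_le) hlog_le (log_pos hx)
      (log_le_log (zero_lt_one.trans hx) hxy)
  have hratio_nonneg : 0 ≤ log (1 + √(c / y)) / log y :=
    div_nonneg hlog_nonneg (log_pos hy).le
  exact mul_le_mul (by linarith) (by linarith) (by linarith) (by positivity)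

/-- With `f(x) = (x + √(2x)) · log(x + √(2x)) / (x · log x)` (natural
logarithm), `f` is decreasing on `(1, ∞)`: for all `1 < x ≤ y`, `f(y) ≤ f(x)`. -/
theorem stmt10 (x y : ℝ) (hx : 1 < x) (hxy : x ≤ y) :
    ((y + Real.sqrt (2 * y)) * Real.log (y + Real.sqrt (2 * y))) / (y * Real.log y) ≤
      ((x + Real.sqrt (2 * x)) * Real.log (x + Real.sqrt (2 * x))) / (x * Real.log x) :=
  antitoneOn_add_sqrt_mul_log_div zero_le_two hx (hx.trans_le hxy) hxy
end
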